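/- The hypergeometric summation identity Σ_{j≥0} (1/(k−j)!) · (ℓ−j) · ∏_{r=2}^{ℓ−j} (x − r + k − j) = (1/k!) · ((xℓ − k)/(x(x−1))) · ∏_{r=1}^{ℓ} (x − r + k) holds as an identity of rational functions in x, for all integers 0 ≤ k ≤ ℓ, with the same product conventions as before. -/

import Mathlib

open Finset

noncomputable section SummingLemmaTwoAux

instance : CharZero (RatFunc ℚ) :=
  charZero_of_injective_algebraMap (algebraMap ℚ (RatFunc ℚ)).injective

/-- `SS n = X (X+1) ⋯ (X+n-1)`. -/
noncomputable def SS (n : ℕ) : RatFunc ℚ :=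
  ∏ u ∈ Finset.range n, (RatFunc.X + (u : RatFunc ℚ))

/-- `RR n = (X-1) X (X+1) ⋯ (X+n-2)`. -/
noncomputable def RR (n : ℕ) : RatFunc ℚ :=
  ∏ u ∈ Finset.range n, (RatFunc.X - 1 + (u : RatFunc ℚ))

lemma fact_ne (n : ℕ) : ((Nat.factorial n : ℕ) : RatFunc ℚ) ≠ 0 :=
  Nat.cast_ne_zero.mpr (Nat.factorial_ne_zero n)

lemma hX1 : (RatFunc.X : RatFunc ℚ) - 1 ≠ 0 := by
  rw [sub_ne_zero]
  intro h
  have h2 : (algebraMap (Polynomial ℚ) (RatFunc ℚ)) Polynomial.X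
      = (algebraMap (Polynomial ℚ) (RatFunc ℚ)) 1 := by
    simpa [RatFunc.algebraMap_X] using h
  have h3 : (Polynomial.X : Polynomial ℚ) = 1 := RatFunc.algebraMap_injective ℚ h2
  simpa [Polynomial.coeff_one] using congrArg (fun p => Polynomial.coeff p 1) h3

lemma refl_prod (a : RatFunc ℚ) (n : ℕ) :
    ∏ u ∈ Finset.range n, (a + (n : RatFunc ℚ) - 1 - (u : RatFunc ℚ))
      = ∏ u ∈ Finset.range n, (a + (u : RatFunc ℚ)) := by
  rw [← Finset.prod_range_reflect]
  refine Finset.prod_congr rfl fun u hu => ?_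
  rw [Finset.mem_range] at hu
  have h2 : u ≤ n - 1 := by omega
  have h1 : (1:ℕ) ≤ n := by omega
  push_cast [Nat.cast_sub h2, Nat.cast_sub h1]
  ring

lemma prodA (i : ℕ) :
    ∏ r ∈ Finset.Icc 2 (i+1), (RatFunc.X - (r : RatFunc ℚ) + ((i : RatFunc ℚ) + 1))
      = SS i := by
  rw [← Finset.Ico_add_one_right_eq_Icc, Finset.prod_Ico_eq_prod_range]
  have : i + 1 + 1 - 2 = i := by omega
  rw [this, SS, ← refl_prod RatFunc.X i]
  refine Finset.prod_congr rfl fun u hu => ?_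
  push_cast
  ring

lemma prodB (m i : ℕ) (hm : 1 ≤ m) :
    ∏ r ∈ Finset.Icc 2 (m+i), (RatFunc.X - (r : RatFunc ℚ) + (i : RatFunc ℚ))
      = RR i * ∏ r ∈ Finset.Icc 2 m, (RatFunc.X - (r : RatFunc ℚ)) := by
  rw [← Finset.Ico_add_one_right_eq_Icc, Finset.prod_Ico_eq_prod_range,
      ← Finset.Ico_add_one_right_eq_Icc, Finset.prod_Ico_eq_prod_range]
  have h1 : m + i + 1 - 2 = i + (m - 1) := by omega
  have h2 : m + 1 - 2 = m - 1 := by omega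
  rw [h1, h2, Finset.prod_range_add]
  congr 1
  · rw [RR, ← refl_prod (RatFunc.X - 1) i]
    refine Finset.prod_congr rfl fun u hu => ?_
    push_cast
    ring
  · refine Finset.prod_congr rfl fun u hu => ?_
    push_cast
    ring

lemma prodC (k m : ℕ) (hm : 1 ≤ m) :
    ∏ r ∈ Finset.Icc 1 (k+m), (RatFunc.X - (r : RatFunc ℚ) + (k : RatFunc ℚ))
      = RR (k+1) * ∏ r ∈ Finset.Icc 2 m, (RatFunc.X - (r : RatFunc ℚ)) := by
  rw [← Finset.Ico_add_one_right_eq_Icc, Finset.prod_Ico_eq_prod_range,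
      ← Finset.Ico_add_one_right_eq_Icc, Finset.prod_Ico_eq_prod_range]
  have h1 : k + m + 1 - 1 = (k + 1) + (m - 1) := by omega
  have h2 : m + 1 - 2 = m - 1 := by omega
  rw [h1, h2, Finset.prod_range_add]
  congr 1
  · rw [RR, ← refl_prod (RatFunc.X - 1) (k+1)]
    refine Finset.prod_congr rfl fun u hu => ?_
    push_cast
    ring
  · refine Finset.prod_congr rfl fun u hu => ?_
    push_cast
    ring

lemma prodD (k : ℕ) :
    ∏ r ∈ Finset.Icc 1 k, (RatFunc.X - (r : RatFunc ℚ) + (k : RatFunc ℚ))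
      = SS k := by
  rw [← Finset.Ico_add_one_right_eq_Icc, Finset.prod_Ico_eq_prod_range]
  have : k + 1 - 1 = k := by omega
  rw [this, SS, ← refl_prod RatFunc.X k]
  refine Finset.prod_congr rfl fun u hu => ?_
  push_cast
  ring

lemma core0 (k : ℕ) : ∑ n ∈ Finset.range k, (SS n) / (Nat.factorial n : RatFunc ℚ)
    = (k : RatFunc ℚ) * SS k / ((Nat.factorial k : RatFunc ℚ) * RatFunc.X) := by
  induction k with
  | zero => simp
  | succ k ih =>
    rw [Finset.sum_range_succ, ih, show SS (k+1) = SS k * (RatFunc.X + (k : RatFunc ℚ)) from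
      Finset.prod_range_succ _ k]
    have hX : (RatFunc.X : RatFunc ℚ) ≠ 0 := RatFunc.X_ne_zero
    have h1 := fact_ne k
    have h2 : ((k:RatFunc ℚ)+1) ≠ 0 := Nat.cast_add_one_ne_zero k
    rw [Nat.factorial_succ]
    push_cast
    field_simp
    ring

lemma core1 (m k : ℕ) :
    ∑ i ∈ Finset.range (k+1), ((m : RatFunc ℚ) + (i : RatFunc ℚ)) /
        (Nat.factorial i : RatFunc ℚ) * RR i
      = ((RatFunc.X * ((m : RatFunc ℚ) + (k : RatFunc ℚ)) - (k : RatFunc ℚ)) * RR (k+1)) /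
          ((Nat.factorial k : RatFunc ℚ) * (RatFunc.X * (RatFunc.X - 1))) := by
  have hX : (RatFunc.X : RatFunc ℚ) ≠ 0 := RatFunc.X_ne_zero
  have hX1 := hX1
  induction k with
  | zero =>
    rw [Finset.sum_range_one, show RR 1 = RatFunc.X - 1 by simp [RR],
      show RR 0 = 1 by simp [RR]]
    push_cast
    field_simp
    ring
  | succ k ih =>
    rw [Finset.sum_range_succ, ih,
      show RR (k+2) = RR (k+1) * (RatFunc.X - 1 + ((k:RatFunc ℚ)+1)) by
        rw [RR, Finset.prod_range_succ, ← RR]; push_cast; ring]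
    have h1 := fact_ne k
    have h2 : ((k:RatFunc ℚ)+1) ≠ 0 := Nat.cast_add_one_ne_zero k
    rw [Nat.factorial_succ]
    push_cast
    field_simp
    ring

end SummingLemmaTwoAux

/-- the summation identity
`Σ_{j=0}^{k} (1/(k−j)!) · (ℓ−j) · ∏_{r=2}^{ℓ−j} (x − r + k − j)
  = (1/k!) · ((xℓ − k)/(x(x−1))) · ∏_{r=1}^{ℓ} (x − r + k)`
as an identity of rational functions in `x` (here `x = X` in `RatFunc ℚ`), for all
integers `0 ≤ k ≤ ℓ`, with the convention that the product `∏_{r=2}^{s}` is `1` when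
`s = 1` and is `1/(x − 1 + k − j)` when `s = ℓ − j = 0`. -/
theorem summing_lemma_two (k l : ℕ) (hkl : k ≤ l) :
    ∑ j ∈ Finset.range (k + 1),
      ((Nat.factorial (k - j) : RatFunc ℚ))⁻¹ *
        ((l : RatFunc ℚ) - (j : RatFunc ℚ)) *
        (if l - j = 0 then
            ((RatFunc.X : RatFunc ℚ) - 1 + ((k : RatFunc ℚ) - (j : RatFunc ℚ)))⁻¹
          else
            ∏ r ∈ Finset.Icc 2 (l - j),
              ((RatFunc.X : RatFunc ℚ) - (r : RatFunc ℚ) +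
                ((k : RatFunc ℚ) - (j : RatFunc ℚ)))) =
    ((Nat.factorial k : RatFunc ℚ))⁻¹ *
      (((RatFunc.X : RatFunc ℚ) * (l : RatFunc ℚ) - (k : RatFunc ℚ)) /
        ((RatFunc.X : RatFunc ℚ) * ((RatFunc.X : RatFunc ℚ) - 1))) *
      ∏ r ∈ Finset.Icc 1 l,
        ((RatFunc.X : RatFunc ℚ) - (r : RatFunc ℚ) + (k : RatFunc ℚ)) := by
  have hX : (RatFunc.X : RatFunc ℚ) ≠ 0 := RatFunc.X_ne_zero
  have hX1' := hX1
  rw [← Finset.sum_range_reflect]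
  rcases eq_or_lt_of_le hkl with h | h
  · -- case k = l
    subst h
    trans (∑ i ∈ Finset.range (k + 1),
        (if i = 0 then 0 else SS (i-1) / (Nat.factorial (i-1) : RatFunc ℚ)))
    · refine Finset.sum_congr rfl fun i hi => ?_
      rw [Finset.mem_range] at hi
      simp only [Nat.add_sub_cancel]
      rcases i with _ | j
      · simp
      · have e1 : k - (k - (j+1)) = j + 1 := by omega
        have e2 : ((k : RatFunc ℚ) - ((k - (j+1) : ℕ) : RatFunc ℚ))
            = (j : RatFunc ℚ) + 1 := by
          rw [Nat.cast_sub (by omega)]; push_cast; ring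
        rw [e1, e2, if_neg (by omega), prodA j, if_neg (Nat.succ_ne_zero j)]
        simp only [Nat.add_sub_cancel]
        rw [Nat.factorial_succ]
        have h1 := fact_ne j
        have h2 : ((j:RatFunc ℚ)+1) ≠ 0 := Nat.cast_add_one_ne_zero j
        push_cast
        field_simp
    · rw [Finset.sum_range_succ']
      simp only [Nat.succ_ne_zero, if_false, if_pos rfl, Nat.add_sub_cancel, add_zero,
        reduceIte]
      rw [core0 k, prodD k]
      have h1 := fact_ne k
      field_simp
  · -- case k < l
    obtain ⟨m, hm, rfl⟩ : ∃ m, 1 ≤ m ∧ l = k + m := ⟨l - k, by omega, by omega⟩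
    trans (∑ i ∈ Finset.range (k + 1),
        (((m : RatFunc ℚ) + (i : RatFunc ℚ)) / (Nat.factorial i : RatFunc ℚ) * RR i) *
          (∏ r ∈ Finset.Icc 2 m, (RatFunc.X - (r : RatFunc ℚ))))
    · refine Finset.sum_congr rfl fun i hi => ?_
      rw [Finset.mem_range] at hi
      simp only [Nat.add_sub_cancel]
      have e1 : k + m - (k - i) = m + i := by omega
      have e2 : k - (k - i) = i := by omega
      have e3 : ((k : RatFunc ℚ) - ((k - i : ℕ) : RatFunc ℚ)) = (i : RatFunc ℚ) := by
        rw [Nat.cast_sub (by omega)]; ring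
      have e4 : (((k + m : ℕ) : RatFunc ℚ) - ((k - i : ℕ) : RatFunc ℚ))
          = (m : RatFunc ℚ) + (i : RatFunc ℚ) := by
        rw [Nat.cast_sub (by omega)]; push_cast; ring
      rw [e1, e2, e3, e4, if_neg (by omega), prodB m i hm]
      ring
    · rw [← Finset.sum_mul, core1 m k, prodC k m hm]
      have h1 := fact_ne k
      push_cast
      field_simp
      ring
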